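/- arXiv:1711.00172 — 4 statements merged into one kernel-verified Lean document; each statement's English description precedes it below -/
import Mathlib

section
/- Let T_l = { u·4^l + Σ_{i=0}^{l-1} v_i·4^i : u ∈ {1,2,3,4}, v_i ∈ {1,2} for 0 ≤ i ≤ l−1 } for each integer l ≥ 0, and let A = ⋃_{l≥0} T_l. Then for every integer n ≥ 32 there exist a, b ∈ A with a < b < n and a + n = 2b; in particular, A is an AP₃-covering sequence. -/
/-!
`A` contains `1, …, 4` and is closed under `t ↦ 4t + 1` and `t ↦ 4t + 2`. Write `n = 4q + r`
with `r < 4`. A progression `a', b', q` with `a', b' ∈ A` lifts to the progression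
`4a' + v, 4b' + w, n`, where `v, w ∈ {1, 2}` are chosen with `v + r = 2w`; such a choice exists
for every residue `r`. So the claim descends from `n` to `⌊n / 4⌋`, and for `3 ≤ n < 12` one can
take `a = 2 - n % 2`, which puts `b` in `[2, 6] ⊆ A`.
-/

/-- `T l` is the set of integers `u·4^l + ∑_{i<l} v_i·4^i` with `u ∈ {1,2,3,4}`
and `v_i ∈ {1,2}` for `0 ≤ i ≤ l-1`. -/
def T (l : ℕ) : Set ℕ :=
  {n | ∃ u : ℕ, (1 ≤ u ∧ u ≤ 4) ∧ ∃ v : ℕ → ℕ, (∀ i, i < l → v i = 1 ∨ v i = 2) ∧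
    n = u * 4 ^ l + ∑ i ∈ Finset.range l, v i * 4 ^ i}

/-- `A = ⋃_{l ≥ 0} T_l`. -/
def A : Set ℕ := ⋃ l : ℕ, T l

/-- The counting function of a set `S` of nonnegative integers:
the number of elements of `S` that are at most `n`. -/
noncomputable def cnt (S : Set ℕ) (n : ℕ) : ℕ := (S ∩ Set.Iic n).ncard

/-- `S` is an `AP₃`-covering sequence if there is `n₀` such that every `n > n₀`
is the last term of a 3-term arithmetic progression whose first two terms lie in `S`. -/
def AP3Covering (S : Set ℕ) : Prop :=
  ∃ n₀ : ℕ, ∀ n : ℕ, n₀ < n → ∃ a ∈ S, ∃ b ∈ S, a < b ∧ b < n ∧ a + n = 2 * b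

lemma mem_T_zero {u : ℕ} (h1 : 1 ≤ u) (h4 : u ≤ 4) : u ∈ T 0 :=
  ⟨u, ⟨h1, h4⟩, fun _ => 1, fun _ hi => absurd hi (Nat.not_lt_zero _), by simp⟩

lemma four_mul_add_mem_T {l t v : ℕ} (ht : t ∈ T l) (hv : v = 1 ∨ v = 2) :
    4 * t + v ∈ T (l + 1) := by
  obtain ⟨u, hu, w, hw, rfl⟩ := ht
  refine ⟨u, hu, fun i => if i = 0 then v else w (i - 1), fun i hi => ?_, ?_⟩
  · rcases i with _ | i
    · simpa using hv
    · simpa using hw i (by omega)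
  · simp only [Finset.sum_range_succ', add_eq_zero, one_ne_zero, and_false, if_false,
      add_tsub_cancel_right, if_true, pow_zero, mul_one, pow_succ]
    rw [mul_add, Finset.mul_sum]
    simp only [fun x => show 4 * (w x * 4 ^ x) = w x * (4 ^ x * 4) by ring]
    ring

lemma mem_A_of_le_four {u : ℕ} (h1 : 1 ≤ u) (h4 : u ≤ 4) : u ∈ A :=
  Set.mem_iUnion.2 ⟨0, mem_T_zero h1 h4⟩

lemma four_mul_add_mem_A {t v : ℕ} (ht : t ∈ A) (hv : v = 1 ∨ v = 2) : 4 * t + v ∈ A := by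
  obtain ⟨l, hl⟩ := Set.mem_iUnion.1 ht
  exact Set.mem_iUnion.2 ⟨l + 1, four_mul_add_mem_T hl hv⟩

lemma mem_A_of_le_six {b : ℕ} (h1 : 1 ≤ b) (h6 : b ≤ 6) : b ∈ A := by
  rcases le_or_gt b 4 with h4 | h4
  · exact mem_A_of_le_four h1 h4
  · obtain rfl | rfl : b = 4 * 1 + 1 ∨ b = 4 * 1 + 2 := by omega
    exacts [four_mul_add_mem_A (mem_A_of_le_four le_rfl (by norm_num)) (.inl rfl),
      four_mul_add_mem_A (mem_A_of_le_four le_rfl (by norm_num)) (.inr rfl)]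

lemma exists_mem_A_four_mul_add {q r a' b' : ℕ} (ha' : a' ∈ A) (hb' : b' ∈ A) (hr : r < 4)
    (hlt : a' < q) (hap : a' + q = 2 * b') :
    ∃ a ∈ A, ∃ b ∈ A, a < 4 * q + r ∧ a + (4 * q + r) = 2 * b := by
  obtain ⟨v, w, hv, hw, hvw⟩ : ∃ v w : ℕ, (v = 1 ∨ v = 2) ∧ (w = 1 ∨ w = 2) ∧ v + r = 2 * w := by
    interval_cases r
    exacts [⟨2, 1, by simp⟩, ⟨1, 1, by simp⟩, ⟨2, 2, by simp⟩, ⟨1, 2, by simp⟩]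
  exact ⟨4 * a' + v, four_mul_add_mem_A ha' hv, 4 * b' + w, four_mul_add_mem_A hb' hw,
    by omega, by omega⟩

lemma exists_mem_A_add_eq_two_mul {n : ℕ} (hn : 3 ≤ n) :
    ∃ a ∈ A, ∃ b ∈ A, a < n ∧ a + n = 2 * b := by
  induction n using Nat.strong_induction_on with
  | _ n ih =>
    rcases lt_or_ge n 12 with hsmall | hlarge
    · exact ⟨2 - n % 2, mem_A_of_le_six (by omega) (by omega),
        (n + 2 - n % 2) / 2, mem_A_of_le_six (by omega) (by omega), by omega, by omega⟩
    · obtain ⟨a', ha', b', hb', hlt, hap⟩ := ih (n / 4) (by omega) (by omega)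
      have hn : n = 4 * (n / 4) + n % 4 := (Nat.div_add_mod n 4).symm
      rw [hn]
      exact exists_mem_A_four_mul_add ha' hb' (Nat.mod_lt n (by norm_num)) hlt hap

theorem stmt_1 :
    (∀ n : ℕ, 32 ≤ n → ∃ a ∈ A, ∃ b ∈ A, a < b ∧ b < n ∧ a + n = 2 * b) ∧
      AP3Covering A := by
  have main : ∀ n : ℕ, 3 ≤ n → ∃ a ∈ A, ∃ b ∈ A, a < b ∧ b < n ∧ a + n = 2 * b := by
    intro n hn
    obtain ⟨a, ha, b, hb, hlt, hap⟩ := exists_mem_A_add_eq_two_mul hn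
    exact ⟨a, ha, b, hb, by omega, by omega, hap⟩
  exact ⟨fun n hn => main n (by omega), 2, main⟩
end

section
/- Let T_l = { u·4^l + Σ_{i=0}^{l-1} v_i·4^i : u ∈ {1,2,3,4}, v_i ∈ {1,2} for 0 ≤ i ≤ l−1 } for each integer l ≥ 0, and let A = ⋃_{l≥0} T_l. Then limsup_{n→∞} A(n)/√n = √15, where A(n) denotes the number of elements of A that are at most n. -/
/-!
Since `T (l+1) = 4 • T l + {1, 2}`, the set `A` is `{1,2,3,4} ∪ (4 • A + {1, 2})`, which
yields an explicit increasing enumeration `enumA` with `enumA (2j + b + 4) = 4 enumA j + b + 1`.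
Writing `m + 4 = (q + 4) 2^l + r` with `q < 4`, `r < 2^l`, induction on `l` gives
`3 enumA m + 1 ≥ (3q + 4) 4^l + r² + 2r`, whence `(m + 4)² ≤ 15 enumA m + 6`; so
`A(n)² ≤ 15 n` for all `n`. The bound is asymptotically attained at
`n = enumA (5·2^l - 5) = 4^l + ∑_{i<l} 2·4^i`, where `A(n) = 5·2^l - 4` while
`3n + 2 = 5·4^l`.
-/

open Filter Topology

theorem T_zero : T 0 = Set.Icc 1 4 := by
  ext n
  simp [T, and_assoc]

theorem T_succ (l : ℕ) : T (l + 1) = {n | ∃ t ∈ T l, ∃ b < 2, n = 4 * t + b + 1} := by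
  ext n
  simp only [T, Set.mem_ofPred_eq, Finset.sum_range_succ' _ l]
  constructor
  · rintro ⟨u, hu, v, hv, rfl⟩
    have hv0 := hv 0 (by omega)
    refine ⟨u * 4 ^ l + ∑ i ∈ Finset.range l, v (i + 1) * 4 ^ i,
      ⟨u, hu, fun i => v (i + 1), fun i hi => hv (i + 1) (by omega), rfl⟩,
      v 0 - 1, by omega, ?_⟩
    rw [mul_add, Finset.mul_sum]
    simp only [pow_succ]
    ring_nf
    omega
  · rintro ⟨t, ⟨u, hu, v, hv, rfl⟩, b, hb, rfl⟩
    refine ⟨u, hu, fun i => if i = 0 then b + 1 else v (i - 1), fun i hi => ?_, ?_⟩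
    · dsimp only
      split_ifs
      · omega
      · exact hv (i - 1) (by omega)
    · simp only [add_tsub_cancel_right, Nat.add_one_ne_zero, if_false, if_true, pow_succ,
        pow_zero]
      rw [mul_add, Finset.mul_sum]
      ring_nf

theorem mem_A_iff {n : ℕ} :
    n ∈ A ↔ n ∈ Set.Icc 1 4 ∨ ∃ t ∈ A, ∃ b < 2, n = 4 * t + b + 1 := by
  simp only [A, Set.mem_iUnion]
  constructor
  · rintro ⟨_ | l, hn⟩
    · exact .inl (T_zero ▸ hn)
    · obtain ⟨t, ht, b, hb, rfl⟩ := T_succ l ▸ hn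
      exact .inr ⟨t, ⟨l, ht⟩, b, hb, rfl⟩
  · rintro (hn | ⟨t, ⟨l, ht⟩, b, hb, rfl⟩)
    · exact ⟨0, T_zero ▸ hn⟩
    · exact ⟨l + 1, T_succ l ▸ ⟨t, ht, b, hb, rfl⟩⟩

def enumA (m : ℕ) : ℕ :=
  if m < 4 then m + 1 else 4 * enumA ((m - 4) / 2) + m % 2 + 1
decreasing_by omega

theorem enumA_of_lt_four {m : ℕ} (hm : m < 4) : enumA m = m + 1 := by
  rw [enumA, if_pos hm]

theorem enumA_two_mul_add_add_four (j b : ℕ) (hb : b < 2) :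
    enumA (2 * j + b + 4) = 4 * enumA j + b + 1 := by
  rw [enumA, if_neg (by omega), show (2 * j + b + 4 - 4) / 2 = j by omega,
    show (2 * j + b + 4) % 2 = b by omega]

theorem exists_two_mul_add_add_four {m : ℕ} (hm : 4 ≤ m) :
    ∃ j b, b < 2 ∧ m = 2 * j + b + 4 :=
  ⟨(m - 4) / 2, m % 2, Nat.mod_lt _ two_pos, by omega⟩

theorem mem_range_enumA_iff {n : ℕ} :
    n ∈ Set.range enumA ↔
      n ∈ Set.Icc 1 4 ∨ ∃ t ∈ Set.range enumA, ∃ b < 2, n = 4 * t + b + 1 := by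
  constructor
  · rintro ⟨m, rfl⟩
    rcases lt_or_ge m 4 with hm | hm
    · rw [enumA_of_lt_four hm]
      exact .inl ⟨by omega, by omega⟩
    · obtain ⟨j, b, hb, rfl⟩ := exists_two_mul_add_add_four hm
      exact .inr ⟨enumA j, ⟨j, rfl⟩, b, hb, enumA_two_mul_add_add_four j b hb⟩
  · rintro (⟨h1, h4⟩ | ⟨t, ⟨j, rfl⟩, b, hb, rfl⟩)
    · exact ⟨n - 1, by rw [enumA_of_lt_four (by omega)]; omega⟩
    · exact ⟨2 * j + b + 4, enumA_two_mul_add_add_four j b hb⟩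

theorem A_eq_range_enumA : A = Set.range enumA := by
  ext n
  induction n using Nat.strong_induction_on with
  | _ n ih =>
    rw [mem_A_iff, mem_range_enumA_iff]
    refine or_congr Iff.rfl ⟨?_, ?_⟩ <;> rintro ⟨t, ht, b, hb, rfl⟩
    · exact ⟨t, (ih t (by omega)).mp ht, b, hb, rfl⟩
    · exact ⟨t, (ih t (by omega)).mpr ht, b, hb, rfl⟩

theorem enumA_strictMono : StrictMono enumA := by
  refine strictMono_nat_of_lt_succ fun m => ?_
  induction m using Nat.strong_induction_on with
  | _ m ih =>
    rcases lt_or_ge m 3 with hm | hm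
    · rw [enumA_of_lt_four (by omega), enumA_of_lt_four (by omega)]
      omega
    rcases hm.eq_or_lt with rfl | hm
    · rw [enumA_of_lt_four (by omega), show 3 + 1 = 2 * 0 + 0 + 4 from rfl,
        enumA_two_mul_add_add_four 0 0 two_pos, enumA_of_lt_four (by omega)]
      omega
    obtain ⟨j, b, hb, rfl⟩ := exists_two_mul_add_add_four hm
    rw [enumA_two_mul_add_add_four j b hb]
    interval_cases b
    · rw [show 2 * j + 0 + 4 + 1 = 2 * j + 1 + 4 by ring,
        enumA_two_mul_add_add_four j 1 one_lt_two]
      omega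
    · rw [show 2 * j + 1 + 4 + 1 = 2 * (j + 1) + 0 + 4 by ring,
        enumA_two_mul_add_add_four (j + 1) 0 two_pos]
      have := ih j (by omega)
      omega

theorem exists_add_four_eq_mul_two_pow_add (m : ℕ) :
    ∃ l q r, q < 4 ∧ r < 2 ^ l ∧ m + 4 = (q + 4) * 2 ^ l + r := by
  induction m using Nat.strong_induction_on with
  | _ m ih =>
    rcases lt_or_ge m 4 with hm | hm
    · exact ⟨0, m, 0, hm, by simp, by simp⟩
    obtain ⟨j, b, hb, rfl⟩ := exists_two_mul_add_add_four hm
    obtain ⟨l, q, r, hq, hr, hj⟩ := ih j (by omega)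
    refine ⟨l + 1, q, 2 * r + b, hq, by rw [pow_succ]; omega, ?_⟩
    rw [pow_succ]
    linear_combination 2 * hj

theorem le_three_mul_enumA_add_one {l q r m : ℕ} (hq : q < 4) (hr : r < 2 ^ l)
    (hm : m + 4 = (q + 4) * 2 ^ l + r) :
    (3 * q + 4) * 4 ^ l + r ^ 2 + 2 * r ≤ 3 * enumA m + 1 := by
  induction l generalizing r m with
  | zero =>
    obtain rfl : r = 0 := by simpa using hr
    rw [pow_zero, mul_one, add_zero] at hm
    rw [enumA_of_lt_four (by omega), pow_zero]
    omega
  | succ l ih =>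
    obtain ⟨s, b, hb, rfl⟩ : ∃ s b, b < 2 ∧ r = 2 * s + b :=
      ⟨r / 2, r % 2, Nat.mod_lt _ two_pos, by omega⟩
    rw [pow_succ] at hr
    have hm' : m + 4 = 2 * ((q + 4) * 2 ^ l + s) + b := by rw [hm, pow_succ]; ring
    have h4 : q + 4 ≤ (q + 4) * 2 ^ l := Nat.le_mul_of_pos_right _ (Nat.two_pow_pos l)
    obtain ⟨j, rfl⟩ : ∃ j, m = 2 * j + b + 4 := ⟨(q + 4) * 2 ^ l + s - 4, by omega⟩
    have hj := ih (r := s) (m := j) (by omega) (by omega)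
    rw [enumA_two_mul_add_add_four j b hb, pow_succ]
    interval_cases b <;> nlinarith

theorem sq_add_four_le_enumA (m : ℕ) : (m + 4) ^ 2 ≤ 15 * enumA m + 6 := by
  obtain ⟨l, q, r, hq, hr, hm⟩ := exists_add_four_eq_mul_two_pow_add m
  have h := le_three_mul_enumA_add_one hq hr hm
  rw [hm]
  rw [show (4 : ℕ) ^ l = (2 ^ l) ^ 2 by rw [← pow_mul, mul_comm, pow_mul]; norm_num] at h
  interval_cases q <;> nlinarith

theorem enumA_five_mul_two_pow_sub_five (l : ℕ) : 3 * enumA (5 * 2 ^ l - 5) + 2 = 5 * 4 ^ l := by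
  induction l with
  | zero => simp [enumA_of_lt_four]
  | succ l ih =>
    have h1 : 1 ≤ 2 ^ l := Nat.one_le_two_pow
    rw [show 5 * 2 ^ (l + 1) - 5 = 2 * (5 * 2 ^ l - 5) + 1 + 4 by rw [pow_succ]; omega,
      enumA_two_mul_add_add_four _ 1 one_lt_two, pow_succ]
    omega

theorem cnt_range_le_iff {a : ℕ → ℕ} (ha : StrictMono a) {n c : ℕ} :
    cnt (Set.range a) n ≤ c ↔ n < a c := by
  rw [cnt, ← Set.image_preimage_eq_range_inter, Set.ncard_image_of_injective _ ha.injective]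
  constructor
  · intro h
    by_contra! hc
    have hsub : Set.Iic c ⊆ a ⁻¹' Set.Iic n := fun m hm => (ha.monotone hm).trans hc
    have hfin : (a ⁻¹' Set.Iic n).Finite :=
      (Set.finite_Iic n).subset fun m hm => (ha.id_le m).trans hm
    have := Set.ncard_le_ncard hsub hfin
    rw [Set.ncard_Iic_nat] at this
    omega
  · intro h
    have hsub : a ⁻¹' Set.Iic n ⊆ Set.Iio c := fun m hm => ha.lt_iff_lt.mp (hm.trans_lt h)
    simpa using Set.ncard_le_ncard hsub (Set.finite_Iio c)

theorem cnt_A_sq_le (n : ℕ) : cnt A n ^ 2 ≤ 15 * n := by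
  rw [A_eq_range_enumA]
  set c := cnt (Set.range enumA) n
  rcases Nat.eq_zero_or_pos c with hc | hc
  · simp [hc]
  have hle : enumA (c - 1) ≤ n :=
    not_lt.mp fun h => by have := (cnt_range_le_iff enumA_strictMono).mpr h; omega
  have := sq_add_four_le_enumA (c - 1)
  rw [show c - 1 + 4 = c + 3 by omega] at this
  nlinarith

theorem lt_cnt_A_enumA (m : ℕ) : m < cnt A (enumA m) := by
  rw [A_eq_range_enumA]
  exact not_le.mp fun h => lt_irrefl _ ((cnt_range_le_iff enumA_strictMono).mp h)

theorem cnt_A_div_sqrt_le (n : ℕ) : (cnt A n : ℝ) / √n ≤ √15 := by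
  refine div_le_of_le_mul₀ (Real.sqrt_nonneg _) (Real.sqrt_nonneg _) ?_
  rw [← Real.sqrt_mul (by norm_num), Real.le_sqrt (by positivity) (by positivity)]
  exact_mod_cast cnt_A_sq_le n

theorem le_cnt_A_div_sqrt (l : ℕ) :
    √15 * (1 - 4 / (5 * 2 ^ l)) ≤
      (cnt A (enumA (5 * 2 ^ l - 5)) : ℝ) / √(enumA (5 * 2 ^ l - 5) : ℕ) := by
  have hcN := lt_cnt_A_enumA (5 * 2 ^ l - 5)
  have hnN := enumA_five_mul_two_pow_sub_five l
  have hpos : 0 < enumA (5 * 2 ^ l - 5) := by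
    have := Nat.one_le_pow l 4 four_pos
    omega
  set n := enumA (5 * 2 ^ l - 5)
  have hx : (1 : ℝ) ≤ 2 ^ l := one_le_pow₀ one_le_two
  have hc : (5 * 2 ^ l - 4 : ℝ) ≤ cnt A n := by
    have h : 5 * 2 ^ l ≤ cnt A n + 4 := by omega
    have : (5 * 2 ^ l : ℝ) ≤ cnt A n + 4 := by exact_mod_cast h
    linarith
  have hn : 15 * (n : ℝ) ≤ (5 * 2 ^ l) ^ 2 := by
    have : (3 * n + 2 : ℝ) = 5 * 4 ^ l := by exact_mod_cast hnN
    have h4 : (4 : ℝ) ^ l = (2 ^ l) ^ 2 := by rw [← pow_mul, mul_comm, pow_mul]; norm_num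
    rw [mul_pow, ← h4]
    linarith
  have hsqrt : √15 * √n ≤ 5 * 2 ^ l := by
    rw [← Real.sqrt_mul (by norm_num)]
    exact Real.sqrt_le_iff.mpr ⟨by positivity, hn⟩
  rw [le_div_iff₀ (by positivity)]
  calc √15 * (1 - 4 / (5 * 2 ^ l)) * √n = (1 - 4 / (5 * 2 ^ l)) * (√15 * √n) := by ring
    _ ≤ (1 - 4 / (5 * 2 ^ l)) * (5 * 2 ^ l) := by
        gcongr
        rw [sub_nonneg, div_le_one (by positivity)]
        linarith
    _ = 5 * 2 ^ l - 4 := by field_simp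
    _ ≤ cnt A n := hc

theorem stmt_2 :
    Filter.limsup (fun n : ℕ => (cnt A n : ℝ) / Real.sqrt n) Filter.atTop
      = Real.sqrt 15 := by
  set f := fun n : ℕ => (cnt A n : ℝ) / √n
  set φ := fun l : ℕ => enumA (5 * 2 ^ l - 5)
  have hf_nonneg : ∀ n, 0 ≤ f n := fun n => by positivity
  have hf_bdd : IsBoundedUnder (· ≤ ·) atTop f :=
    isBoundedUnder_of ⟨√15, cnt_A_div_sqrt_le⟩
  have hφ : Tendsto φ atTop atTop :=
    enumA_strictMono.tendsto_atTop.comp <| tendsto_atTop_atTop.mpr fun N =>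
      ⟨N + 1, fun l hl => by have := Nat.lt_two_pow_self (n := l); omega⟩
  have hlower : Tendsto (fun l : ℕ => √15 * (1 - 4 / (5 * 2 ^ l))) atTop (𝓝 √15) := by
    have h5 : Tendsto (fun l : ℕ => (5 : ℝ) * 2 ^ l) atTop atTop :=
      (tendsto_pow_atTop_atTop_of_one_lt one_lt_two).const_mul_atTop (by norm_num)
    simpa using (tendsto_const_nhds (x := √15)).mul ((tendsto_const_nhds (x := (1 : ℝ))).sub
      ((tendsto_const_nhds (x := (4 : ℝ))).div_atTop h5))
  have hfφ : Tendsto (f ∘ φ) atTop (𝓝 √15) :=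
    tendsto_of_tendsto_of_tendsto_of_le_of_le hlower tendsto_const_nhds le_cnt_A_div_sqrt
      fun l => cnt_A_div_sqrt_le _
  refine le_antisymm ?_ ?_
  · exact limsup_le_of_le (isCoboundedUnder_le_of_le atTop hf_nonneg)
      (Eventually.of_forall cnt_A_div_sqrt_le)
  · exact hfφ.limsup_eq.symm.le.trans
      (hφ.limsup_comp_le_limsup (isCoboundedUnder_le_of_le _ hf_nonneg) hf_bdd)
end

section
/- Let T_l = { u·4^l + Σ_{i=0}^{l-1} v_i·4^i : u ∈ {1,2,3,4}, v_i ∈ {1,2} } and A = ⋃_{l≥0} T_l. Let l ≥ 1, u ∈ {1,2,3,4}, v_0, …, v_{l-1} ∈ {1,2}, and set m = u·4^l + Σ_{i=0}^{l-1} v_i·4^i. If v_i = 1 for some index 0 ≤ i ≤ l−1, then A(m + 4^i)/√(m + 4^i) > A(m)/√m, where A(n) denotes the number of elements of A that are at most n. -/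
open Finset

/-- The numbers with exactly `k` base-4 digits, all in `{1, 2}`: the digit is `2` exactly at the
positions in `S`. -/
def oneTwoDigits (k : ℕ) : Finset ℕ :=
  (range k).powerset.image fun S => ∑ j ∈ range k, 4 ^ j + ∑ j ∈ S, 4 ^ j

lemma sum_digit_mul_pow_eq {b k : ℕ} {v : ℕ → ℕ} (hv : ∀ j < k, v j = 1 ∨ v j = 2) :
    ∑ j ∈ range k, v j * b ^ j =
      ∑ j ∈ range k, b ^ j + ∑ j ∈ (range k).filter (v · = 2), b ^ j := by
  rw [sum_filter, ← sum_add_distrib]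
  refine sum_congr rfl fun j hj => ?_
  rcases hv j (mem_range.1 hj) with h | h <;> simp [h, two_mul]

lemma mem_oneTwoDigits {k t : ℕ} :
    t ∈ oneTwoDigits k ↔
      ∃ v : ℕ → ℕ, (∀ j < k, v j = 1 ∨ v j = 2) ∧ t = ∑ j ∈ range k, v j * 4 ^ j := by
  constructor
  · intro ht
    obtain ⟨S, hS, rfl⟩ := mem_image.1 ht
    have hv : ∀ j < k, (if j ∈ S then 2 else 1) = 1 ∨ (if j ∈ S then 2 else 1) = 2 :=
      fun j _ => by split_ifs <;> simp
    refine ⟨fun j => if j ∈ S then 2 else 1, hv, ?_⟩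
    rw [sum_digit_mul_pow_eq hv, filter_congr (p := fun j => (if j ∈ S then 2 else 1) = 2)
      (q := (· ∈ S)) (fun j _ => by split_ifs <;> simp [*]), filter_mem_eq_inter,
      inter_eq_right.2 (mem_powerset.1 hS)]
  · rintro ⟨v, hv, rfl⟩
    exact mem_image.2 ⟨_, mem_powerset.2 (filter_subset _ _), (sum_digit_mul_pow_eq hv).symm⟩

lemma card_oneTwoDigits (k : ℕ) : #(oneTwoDigits k) = 2 ^ k := by
  rw [oneTwoDigits, card_image_of_injective _
    fun S S' h => geomSum_injective (by norm_num) (add_left_cancel h),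
    card_powerset, card_range]

lemma le_and_lt_of_mem_oneTwoDigits {k t : ℕ} (ht : t ∈ oneTwoDigits k) :
    4 ^ k ≤ 3 * t + 1 ∧ t < 4 ^ k := by
  obtain ⟨S, hS, rfl⟩ := mem_image.1 ht
  have hS_le : ∑ j ∈ S, 4 ^ j ≤ ∑ j ∈ range k, 4 ^ j :=
    sum_le_sum_of_subset (mem_powerset.1 hS)
  have hgeom : (∑ j ∈ range k, 4 ^ j) * 3 + 1 = 4 ^ k := by
    have := geom_sum_mul_add 3 k
    norm_num at this
    exact this
  omega

lemma add_pow_mul_mem_oneTwoDigits {i k s h : ℕ} (hs : s ∈ oneTwoDigits i)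
    (hh : h ∈ oneTwoDigits k) : s + 4 ^ i * h ∈ oneTwoDigits (i + k) := by
  obtain ⟨w, hw, rfl⟩ := mem_oneTwoDigits.1 hs
  obtain ⟨v, hv, rfl⟩ := mem_oneTwoDigits.1 hh
  refine mem_oneTwoDigits.2 ⟨fun j => if j < i then w j else v (j - i), fun j hj => ?_, ?_⟩
  · dsimp only
    split_ifs with hji
    exacts [hw j hji, hv _ (by omega)]
  · rw [sum_range_add, mul_sum]
    congr 1
    · exact sum_congr rfl fun j hj => by simp [mem_range.1 hj]
    · exact sum_congr rfl fun j _ => by simp [pow_add]; ring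

lemma mem_oneTwoDigits_one {d : ℕ} (hd : d = 1 ∨ d = 2) : d ∈ oneTwoDigits 1 :=
  mem_oneTwoDigits.2 ⟨fun _ => d, fun _ _ => hd, by simp⟩

lemma exists_sum_digit_mul_pow_eq {l i : ℕ} {v : ℕ → ℕ} (hv : ∀ j < l, v j = 1 ∨ v j = 2)
    (hi : i < l) :
    ∃ s ∈ oneTwoDigits i, ∃ h ∈ oneTwoDigits (l - (i + 1)),
      ∑ j ∈ range l, v j * 4 ^ j = s + 4 ^ i * (v i + 4 * h) := by
  obtain ⟨k, rfl⟩ : ∃ k, l = i + (1 + k) := ⟨l - (i + 1), by omega⟩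
  refine ⟨_, mem_oneTwoDigits.2 ⟨v, fun j hj => hv j (by omega), rfl⟩,
    _, mem_oneTwoDigits.2 ⟨fun j => v (i + (1 + j)), fun j hj => hv _ (by omega), rfl⟩, ?_⟩
  rw [show i + (1 + k) - (i + 1) = k by omega, sum_range_add, sum_range_add, sum_range_one]
  simp only [add_zero, mul_add, mul_sum]
  rw [mul_comm (4 ^ i)]
  congr 2
  exact sum_congr rfl fun j _ => by ring

lemma mem_T_iff {k n : ℕ} :
    n ∈ T k ↔ ∃ u, (1 ≤ u ∧ u ≤ 4) ∧ ∃ t ∈ oneTwoDigits k, n = u * 4 ^ k + t := by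
  simp only [T, Set.mem_ofPred_eq, mem_oneTwoDigits]
  constructor
  · rintro ⟨u, hu, v, hv, rfl⟩
    exact ⟨u, hu, _, ⟨v, hv, rfl⟩, rfl⟩
  · rintro ⟨u, hu, _, ⟨v, hv, rfl⟩, rfl⟩
    exact ⟨u, hu, v, hv, rfl⟩

lemma lt_of_mem_T_of_lt {k l x y : ℕ} (hx : x ∈ T k) (hy : y ∈ T l) (hlk : l < k) : y < x := by
  obtain ⟨u', hu', t', ht', rfl⟩ := mem_T_iff.1 hx
  obtain ⟨u, hu, t, ht, rfl⟩ := mem_T_iff.1 hy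
  have hpow : 4 * 4 ^ l ≤ 4 ^ k := by
    simpa [pow_succ'] using Nat.pow_le_pow_right (by norm_num : 0 < 4) hlk
  have := le_and_lt_of_mem_oneTwoDigits ht
  have := le_and_lt_of_mem_oneTwoDigits ht'
  have := Nat.mul_le_mul_right (4 ^ l) hu.2
  have := Nat.mul_le_mul_right (4 ^ k) hu'.1
  omega

lemma le_of_mul_pow_add_le {k u u' t t' : ℕ} (ht : t ∈ oneTwoDigits k)
    (h : u' * 4 ^ k + t' ≤ u * 4 ^ k + t) : u' ≤ u := by
  by_contra! huu'
  have : (u + 1) * 4 ^ k ≤ u' * 4 ^ k := Nat.mul_le_mul_right _ huu'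
  rw [add_one_mul] at this
  have := (le_and_lt_of_mem_oneTwoDigits ht).2
  omega

lemma cnt_le_card {S : Set ℕ} {F : Finset ℕ} {n : ℕ} (h : S ∩ Set.Iic n ⊆ F) : cnt S n ≤ #F :=
  (Set.ncard_le_ncard h F.finite_toSet).trans_eq (Set.ncard_coe_finset F)

lemma cnt_add_card_le {S : Set ℕ} {F : Finset ℕ} {m n : ℕ} (hmn : m ≤ n) (hFS : ↑F ⊆ S)
    (hF : ∀ x ∈ F, m < x ∧ x ≤ n) : cnt S m + #F ≤ cnt S n := by
  have hdisj : Disjoint (S ∩ Set.Iic m) ↑F :=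
    Set.disjoint_left.2 fun x hx hxF => (hF x hxF).1.not_ge hx.2
  rw [cnt, ← Set.ncard_coe_finset, ← Set.ncard_union_eq hdisj
    ((Set.finite_Iic m).inter_of_right S) F.finite_toSet]
  refine Set.ncard_le_ncard (Set.union_subset ?_ fun x hx => ⟨hFS hx, (hF x hx).2⟩)
    ((Set.finite_Iic n).inter_of_right S)
  exact Set.inter_subset_inter_right S (Set.Iic_subset_Iic.2 hmn)

lemma cnt_A_le {l u t : ℕ} (hu : 1 ≤ u ∧ u ≤ 4) (ht : t ∈ oneTwoDigits l) :
    cnt A (u * 4 ^ l + t) ≤ (u + 4) * 2 ^ l := by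
  let lead (k : ℕ) (U : Finset ℕ) : Finset ℕ :=
    (U ×ˢ oneTwoDigits k).image fun p => p.1 * 4 ^ k + p.2
  have card_lead (k : ℕ) (U : Finset ℕ) : #(lead k U) ≤ #U * 2 ^ k :=
    card_image_le.trans_eq (by rw [card_product, card_oneTwoDigits])
  have mem_lead {k u' t' : ℕ} {U : Finset ℕ} (hu' : u' ∈ U) (ht' : t' ∈ oneTwoDigits k) :
      u' * 4 ^ k + t' ∈ lead k U :=
    mem_image.2 ⟨(u', t'), mem_product.2 ⟨hu', ht'⟩, rfl⟩
  have hsub : A ∩ Set.Iic (u * 4 ^ l + t) ⊆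
      ↑((range l).biUnion (fun k => lead k (Icc 1 4)) ∪ lead l (Icc 1 u)) := by
    rintro x ⟨hxA, hxm⟩
    obtain ⟨k, hx⟩ := Set.mem_iUnion.1 hxA
    have hkl : k ≤ l := le_of_not_gt fun hlk =>
      (lt_of_mem_T_of_lt hx (mem_T_iff.2 ⟨u, hu, t, ht, rfl⟩) hlk).not_ge hxm
    obtain ⟨u', hu', t', ht', rfl⟩ := mem_T_iff.1 hx
    rcases hkl.lt_or_eq with hkl | rfl
    · exact mem_union_left _ (mem_biUnion.2 ⟨k, mem_range.2 hkl, mem_lead (mem_Icc.2 hu') ht'⟩)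
    · exact mem_union_right _
        (mem_lead (mem_Icc.2 ⟨hu'.1, le_of_mul_pow_add_le ht hxm⟩) ht')
  have hgeom : ∑ k ∈ range l, 2 ^ k < 2 ^ l := Nat.geomSum_lt le_rfl fun k hk => mem_range.1 hk
  calc cnt A (u * 4 ^ l + t)
      ≤ #((range l).biUnion (fun k => lead k (Icc 1 4)) ∪ lead l (Icc 1 u)) := cnt_le_card hsub
    _ ≤ ∑ k ∈ range l, 4 * 2 ^ k + u * 2 ^ l :=
      (card_union_le _ _).trans (add_le_add (card_biUnion_le.trans (sum_le_sum fun k _ => by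
        simpa using card_lead k (Icc 1 4))) (by simpa using card_lead l (Icc 1 u)))
    _ ≤ (u + 4) * 2 ^ l := by rw [← mul_sum]; nlinarith

lemma cnt_A_add_pow_ge {l u i : ℕ} {v : ℕ → ℕ} (hu : 1 ≤ u ∧ u ≤ 4)
    (hv : ∀ j < l, v j = 1 ∨ v j = 2) (hi : i < l) (hvi : v i = 1) :
    cnt A (u * 4 ^ l + ∑ j ∈ range l, v j * 4 ^ j) + 2 ^ i ≤
      cnt A (u * 4 ^ l + ∑ j ∈ range l, v j * 4 ^ j + 4 ^ i) := by
  obtain ⟨s₀, hs₀, h, hh, hsum⟩ := exists_sum_digit_mul_pow_eq hv hi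
  rw [hsum, hvi]
  -- Digit `i` becomes `2` exactly when the new lower part `s` is at most the old one `s₀`.
  let f (s : ℕ) : ℕ := u * 4 ^ l + 4 ^ i * (4 * h) + (if s ≤ s₀ then 2 else 1) * 4 ^ i + s
  have hfT (s : ℕ) (hs : s ∈ oneTwoDigits i) : f s ∈ T l := by
    have hd : (if s ≤ s₀ then 2 else 1) + 4 ^ 1 * h ∈ oneTwoDigits (1 + (l - (i + 1))) :=
      add_pow_mul_mem_oneTwoDigits (mem_oneTwoDigits_one (by split_ifs <;> simp)) hh
    have := add_pow_mul_mem_oneTwoDigits hs hd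
    rw [show i + (1 + (l - (i + 1))) = l by omega] at this
    exact mem_T_iff.2 ⟨u, hu, _, this, by simp only [f]; ring⟩
  have hs₀lt := (le_and_lt_of_mem_oneTwoDigits hs₀).2
  have hf_range (s : ℕ) (hs : s ∈ oneTwoDigits i) :
      u * 4 ^ l + (s₀ + 4 ^ i * (1 + 4 * h)) < f s ∧
        f s ≤ u * 4 ^ l + (s₀ + 4 ^ i * (1 + 4 * h)) + 4 ^ i := by
    have := (le_and_lt_of_mem_oneTwoDigits hs).2
    simp only [f, mul_add]
    split_ifs <;> omega
  have hf_inj : Set.InjOn f (oneTwoDigits i) := fun s hs s' hs' hss' => by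
    have := (le_and_lt_of_mem_oneTwoDigits hs).2
    have := (le_and_lt_of_mem_oneTwoDigits hs').2
    simp only [f] at hss'
    split_ifs at hss' <;> omega
  have := cnt_add_card_le (S := A) (F := (oneTwoDigits i).image f) (Nat.le_add_right _ _)
    (fun x hx => by
      obtain ⟨s, hs, rfl⟩ := mem_image.1 hx
      exact Set.mem_iUnion.2 ⟨l, hfT s hs⟩)
    (fun x hx => by
      obtain ⟨s, hs, rfl⟩ := mem_image.1 hx
      exact hf_range s hs)
  rwa [card_image_of_injOn hf_inj, card_oneTwoDigits] at this

lemma cnt_A_mul_two_pow_le {l u t i : ℕ} (hu : 1 ≤ u ∧ u ≤ 4) (ht : t ∈ oneTwoDigits l)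
    (hi : i < l) : cnt A (u * 4 ^ l + t) * 2 ^ i ≤ 2 * (u * 4 ^ l + t) := by
  have h4 : 4 ≤ 4 ^ l := Nat.le_self_pow (by omega) 4
  have h2i : 2 * 2 ^ i ≤ 2 ^ l := by
    simpa [pow_succ'] using Nat.pow_le_pow_right two_pos hi
  have := (le_and_lt_of_mem_oneTwoDigits ht).1
  have := Nat.mul_le_mul_right (4 ^ l) hu.1
  have : cnt A (u * 4 ^ l + t) * 2 ^ i * 2 ≤ (u + 4) * 4 ^ l := calc
    _ = cnt A (u * 4 ^ l + t) * (2 * 2 ^ i) := by ring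
    _ ≤ (u + 4) * 2 ^ l * 2 ^ l := Nat.mul_le_mul (cnt_A_le hu ht) h2i
    _ = (u + 4) * 4 ^ l := by rw [mul_assoc, ← mul_pow]; norm_num
  rw [add_mul] at this
  omega

lemma div_sqrt_lt_div_sqrt_add_sq {N N' K m : ℝ} (hN : 0 ≤ N) (hK : 0 < K) (hm : 0 < m)
    (hNK : N * K ≤ 2 * m) (hN' : N + K ≤ N') : N / √m < N' / √(m + K ^ 2) := by
  rw [div_lt_div_iff₀ (Real.sqrt_pos.2 hm) (Real.sqrt_pos.2 (by positivity))]
  calc N * √(m + K ^ 2) = √(N ^ 2 * (m + K ^ 2)) := by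
        rw [Real.sqrt_mul' _ (by positivity), Real.sqrt_sq hN]
    _ < √((N + K) ^ 2 * m) := Real.sqrt_lt_sqrt (by positivity) (by
        nlinarith [mul_le_mul_of_nonneg_right hNK (mul_nonneg hN hK.le),
          mul_pos (mul_pos hK hK) hm])
    _ = (N + K) * √m := by rw [Real.sqrt_mul' _ hm.le, Real.sqrt_sq (by positivity)]
    _ ≤ N' * √m := by gcongr

theorem stmt_10_general (l u : ℕ) (hu : 1 ≤ u ∧ u ≤ 4) (v : ℕ → ℕ)
    (hv : ∀ i, i < l → v i = 1 ∨ v i = 2)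
    (m : ℕ) (hm : m = u * 4 ^ l + ∑ i ∈ Finset.range l, v i * 4 ^ i)
    (i : ℕ) (hi : i < l) (hvi : v i = 1) :
    (cnt A (m + 4 ^ i) : ℝ) / Real.sqrt (m + 4 ^ i)
      > (cnt A m : ℝ) / Real.sqrt m := by
  have ht : ∑ j ∈ range l, v j * 4 ^ j ∈ oneTwoDigits l := mem_oneTwoDigits.2 ⟨v, hv, rfl⟩
  have hsmall := cnt_A_mul_two_pow_le hu ht hi
  have hlower := cnt_A_add_pow_ge hu hv hi hvi
  rw [← hm] at hsmall hlower
  have hm0 : 0 < m := hm ▸ Nat.add_pos_left (Nat.mul_pos hu.1 (by positivity)) _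
  have hsq : ((2 : ℝ) ^ i) ^ 2 = 4 ^ i := by rw [← pow_mul, mul_comm, pow_mul]; norm_num
  have := div_sqrt_lt_div_sqrt_add_sq (N' := cnt A (m + 4 ^ i)) (Nat.cast_nonneg (cnt A m))
    (pow_pos two_pos i) (Nat.cast_pos.2 hm0) (by exact_mod_cast hsmall) (by exact_mod_cast hlower)
  rwa [hsq] at this

theorem stmt_10 (l u : ℕ) (hl : 1 ≤ l) (hu : 1 ≤ u ∧ u ≤ 4) (v : ℕ → ℕ)
    (hv : ∀ i, i < l → v i = 1 ∨ v i = 2)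
    (m : ℕ) (hm : m = u * 4 ^ l + ∑ i ∈ Finset.range l, v i * 4 ^ i)
    (i : ℕ) (hi : i < l) (hvi : v i = 1) :
    (cnt A (m + 4 ^ i) : ℝ) / Real.sqrt (m + 4 ^ i)
      > (cnt A m : ℝ) / Real.sqrt m :=
  stmt_10_general l u hu v hv m hm i hi hvi
end

section
/- Let T_l = { u·4^l + Σ_{i=0}^{l-1} v_i·4^i : u ∈ {1,2,3,4}, v_i ∈ {1,2} } and A = ⋃_{l≥0} T_l. For every integer l ≥ 0 and every u ∈ {1,2,3,4}, setting q_{u,l} = u·4^l + Σ_{i=0}^{l-1} 2·4^i, the number of elements of A that are at most q_{u,l} equals (u+4)·2^l − 4; moreover q_{u,l} = (u + 2/3)·4^l − 2/3. -/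
/-!
Appending a base-4 digit `r ∈ {1, 2}` sends `m` to `4m + r`, so the elements of `T l` with leading
digit at most `k` form a set `digitSet k l` of size `k·2^l` whose maximum `q_{k,l}` satisfies
`q_{k,l+1} = 4q_{k,l} + 2`. Every element of `T (l+1)` exceeds `q_{4,l}`, so the blocks
`T 0, T 1, …` follow each other in increasing order, and since appending digits is monotone the
elements of `T l` up to `q_{u,l}` are exactly those of `digitSet u l`. Hence
`A ∩ [0, q_{u,l}] = T 0 ∪ ⋯ ∪ T (l-1) ∪ digitSet u l`, of size `4(2^l - 1) + u·2^l`.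
-/

open Finset

def digitSet (k : ℕ) : ℕ → Finset ℕ
  | 0 => Icc 1 k
  | l + 1 => (digitSet k l).image (4 * · + 1) ∪ (digitSet k l).image (4 * · + 2)

def digitSetMax (k : ℕ) : ℕ → ℕ
  | 0 => k
  | l + 1 => 4 * digitSetMax k l + 2

lemma mem_digitSet_succ {k l n : ℕ} :
    n ∈ digitSet k (l + 1) ↔ ∃ m ∈ digitSet k l, ∃ r, (r = 1 ∨ r = 2) ∧ n = 4 * m + r := by
  simp only [digitSet, mem_union, mem_image]
  constructor
  · rintro (⟨m, hm, rfl⟩ | ⟨m, hm, rfl⟩)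
    exacts [⟨m, hm, 1, by simp⟩, ⟨m, hm, 2, by simp⟩]
  · rintro ⟨m, hm, r, rfl | rfl, rfl⟩
    exacts [Or.inl ⟨m, hm, rfl⟩, Or.inr ⟨m, hm, rfl⟩]

lemma digitSetMax_eq (k l : ℕ) :
    digitSetMax k l = k * 4 ^ l + ∑ i ∈ range l, 2 * 4 ^ i := by
  induction l with
  | zero => simp [digitSetMax]
  | succ l ih =>
    rw [digitSetMax, ih, sum_range_succ']
    simp only [pow_succ, ← mul_assoc, ← sum_mul]
    ring

lemma digitSetMax_cast_eq (k l : ℕ) :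
    (digitSetMax k l : ℝ) = ((k : ℝ) + 2 / 3) * 4 ^ l - 2 / 3 := by
  induction l with
  | zero => simp [digitSetMax]
  | succ l ih =>
    rw [digitSetMax]
    push_cast
    rw [ih]
    ring

lemma digitSetMax_mono_left {k k' : ℕ} (h : k ≤ k') (l : ℕ) :
    digitSetMax k l ≤ digitSetMax k' l := by
  induction l with
  | zero => exact h
  | succ l ih => simp only [digitSetMax]; omega

lemma digitSetMax_mono_right (k : ℕ) : Monotone (digitSetMax k) :=
  monotone_nat_of_le_succ fun l => by simp only [digitSetMax]; omega

lemma digitSetMax_four_le_one_succ (l : ℕ) : digitSetMax 4 l ≤ digitSetMax 1 (l + 1) := by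
  induction l with
  | zero => simp [digitSetMax]
  | succ l ih => simp only [digitSetMax] at *; omega

lemma digit_expansion_succ (u l : ℕ) (v : ℕ → ℕ) :
    u * 4 ^ (l + 1) + ∑ i ∈ range (l + 1), v i * 4 ^ i
      = 4 * (u * 4 ^ l + ∑ i ∈ range l, v (i + 1) * 4 ^ i) + v 0 := by
  rw [sum_range_succ', pow_succ]
  simp only [pow_succ, ← mul_assoc, ← sum_mul]
  ring

lemma mem_digitSet_iff {k l n : ℕ} :
    n ∈ digitSet k l ↔ ∃ u : ℕ, (1 ≤ u ∧ u ≤ k) ∧ ∃ v : ℕ → ℕ,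
      (∀ i, i < l → v i = 1 ∨ v i = 2) ∧ n = u * 4 ^ l + ∑ i ∈ range l, v i * 4 ^ i := by
  induction l generalizing n with
  | zero =>
    simp only [digitSet, mem_Icc, range_zero, sum_empty, pow_zero, mul_one, add_zero]
    exact ⟨fun h => ⟨n, h, 0, by simp, rfl⟩, by rintro ⟨u, hu, -, -, rfl⟩; exact hu⟩
  | succ l ih =>
    simp only [mem_digitSet_succ, ih, digit_expansion_succ]
    constructor
    · rintro ⟨-, ⟨u, hu, v, hv, rfl⟩, r, hr, rfl⟩
      refine ⟨u, hu, fun i => match i with | 0 => r | i + 1 => v i, ?_, rfl⟩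
      rintro (_ | i) hi
      exacts [hr, hv i (by omega)]
    · rintro ⟨u, hu, v, hv, rfl⟩
      exact ⟨_, ⟨u, hu, _, fun i hi => hv (i + 1) (by omega), rfl⟩, v 0, hv 0 (by omega), rfl⟩

lemma T_eq_digitSet (l : ℕ) : T l = digitSet 4 l := by
  ext n
  exact mem_digitSet_iff.symm

lemma card_digitSet (k l : ℕ) : #(digitSet k l) = k * 2 ^ l := by
  induction l with
  | zero => simp [digitSet]
  | succ l ih =>
    have hdisj : Disjoint ((digitSet k l).image (4 * · + 1)) ((digitSet k l).image (4 * · + 2)) := by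
      simp only [disjoint_left, mem_image]
      rintro - ⟨a, -, rfl⟩ ⟨b, -, h⟩
      omega
    rw [digitSet, card_union_of_disjoint hdisj,
      card_image_of_injective _ fun a b (h : 4 * a + 1 = 4 * b + 1) => by omega,
      card_image_of_injective _ fun a b (h : 4 * a + 2 = 4 * b + 2) => by omega, ih]
    ring

lemma le_digitSetMax_of_mem {k l n : ℕ} (h : n ∈ digitSet k l) : n ≤ digitSetMax k l := by
  induction l generalizing n with
  | zero => exact (mem_Icc.mp h).2
  | succ l ih =>
    obtain ⟨m, hm, r, hr, rfl⟩ := mem_digitSet_succ.mp h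
    have := ih hm
    simp only [digitSetMax]
    omega

lemma digitSetMax_four_lt_of_mem_succ {k l n : ℕ} (h : n ∈ digitSet k (l + 1)) :
    digitSetMax 4 l < n := by
  induction l generalizing n with
  | zero =>
    obtain ⟨m, hm, r, hr, rfl⟩ := mem_digitSet_succ.mp h
    have := (mem_Icc.mp hm).1
    simp only [digitSetMax]
    omega
  | succ l ih =>
    obtain ⟨m, hm, r, -, rfl⟩ := mem_digitSet_succ.mp h
    have := ih hm
    simp only [digitSetMax]
    omega

lemma digitSetMax_four_lt_of_mem {k m l n : ℕ} (hml : m < l) (h : n ∈ digitSet k l) :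
    digitSetMax 4 m < n := by
  obtain ⟨l, rfl⟩ := Nat.exists_eq_add_of_lt hml
  exact (digitSetMax_mono_right 4 (by omega)).trans_lt (digitSetMax_four_lt_of_mem_succ h)

lemma disjoint_digitSet {k m l : ℕ} (hml : m < l) : Disjoint (digitSet 4 m) (digitSet k l) :=
  disjoint_left.mpr fun _ hm hl =>
    (le_digitSetMax_of_mem hm).not_gt (digitSetMax_four_lt_of_mem hml hl)

lemma digitSet_mono {k k' : ℕ} (h : k ≤ k') (l : ℕ) : digitSet k l ⊆ digitSet k' l := by
  induction l with
  | zero => exact Icc_subset_Icc_right h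
  | succ l ih => exact union_subset_union (image_subset_image ih) (image_subset_image ih)

lemma mem_digitSet_of_le_digitSetMax {k k' l n : ℕ} (hn : n ∈ digitSet k' l)
    (hmax : n ≤ digitSetMax k l) : n ∈ digitSet k l := by
  induction l generalizing n with
  | zero => exact mem_Icc.mpr ⟨(mem_Icc.mp hn).1, hmax⟩
  | succ l ih =>
    obtain ⟨m, hm, r, hr, rfl⟩ := mem_digitSet_succ.mp hn
    simp only [digitSetMax] at hmax
    exact mem_digitSet_succ.mpr ⟨m, ih hm (by omega), r, hr, rfl⟩

lemma A_inter_Iic_digitSetMax {u : ℕ} (hu : 1 ≤ u ∧ u ≤ 4) (l : ℕ) :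
    A ∩ Set.Iic (digitSetMax u l) = ↑((range l).biUnion (digitSet 4) ∪ digitSet u l) := by
  ext n
  simp only [A, T_eq_digitSet, Set.mem_inter_iff, Set.mem_iUnion, Set.mem_Iic, coe_union,
    coe_biUnion, mem_coe, coe_range, Set.mem_Iio, Set.mem_union]
  constructor
  · rintro ⟨⟨m, hm⟩, hn⟩
    rcases lt_trichotomy m l with hml | rfl | hlm
    · exact Or.inl ⟨m, hml, hm⟩
    · exact Or.inr (mem_digitSet_of_le_digitSetMax hm hn)
    · have := digitSetMax_four_lt_of_mem hlm hm
      have := digitSetMax_mono_left hu.2 l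
      omega
  · rintro (⟨m, hml, hm⟩ | hm)
    · refine ⟨⟨m, hm⟩, ?_⟩
      calc n ≤ digitSetMax 4 m := le_digitSetMax_of_mem hm
        _ ≤ digitSetMax 1 (m + 1) := digitSetMax_four_le_one_succ m
        _ ≤ digitSetMax u (m + 1) := digitSetMax_mono_left hu.1 _
        _ ≤ digitSetMax u l := digitSetMax_mono_right u hml
    · exact ⟨⟨l, digitSet_mono hu.2 l hm⟩, le_digitSetMax_of_mem hm⟩

lemma card_biUnion_digitSet_union {u : ℕ} (hu : u ≤ 4) (l : ℕ) :
    #((range l).biUnion (digitSet 4) ∪ digitSet u l) = (u + 4) * 2 ^ l - 4 := by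
  have hdisj : Disjoint ((range l).biUnion (digitSet 4)) (digitSet u l) :=
    (disjoint_biUnion_left _ _ _).mpr fun m hm =>
      (disjoint_digitSet (mem_range.mp hm)).mono_right (digitSet_mono hu l)
  have hpair : (range l : Set ℕ).PairwiseDisjoint (digitSet 4) := fun m _ m' _ hne =>
    hne.lt_or_gt.elim disjoint_digitSet fun h => (disjoint_digitSet h).symm
  rw [card_union_of_disjoint hdisj, card_biUnion hpair]
  simp only [card_digitSet, ← mul_sum, Nat.geomSum_eq le_rfl, Nat.add_one_sub_one, Nat.div_one]
  have := Nat.one_le_two_pow (n := l)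
  rw [add_mul]
  omega

theorem stmt_11 (l u : ℕ) (hu : 1 ≤ u ∧ u ≤ 4)
    (q : ℕ) (hq : q = u * 4 ^ l + ∑ i ∈ Finset.range l, 2 * 4 ^ i) :
    cnt A q = (u + 4) * 2 ^ l - 4 ∧
      (q : ℝ) = ((u : ℝ) + 2 / 3) * 4 ^ l - 2 / 3 := by
  rw [← digitSetMax_eq] at hq
  subst hq
  refine ⟨?_, digitSetMax_cast_eq u l⟩
  rw [cnt, A_inter_Iic_digitSetMax hu, Set.ncard_coe_finset, card_biUnion_digitSet_union hu.2]
end
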